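/- arXiv:2103.08895 — 3 statements merged into one kernel-verified Lean document; each statement's English description precedes it below -/
import Mathlib

section
/- Let T ∈ R^{d1×d2} be a nonzero rank-r matrix with singular value decomposition T = U Σ V^T, where U ∈ R^{d1×r} has orthonormal columns. If the spikiness condition sqrt(d1·d2) · ||T||_∞ / ||T||_F ≤ μ1 holds, then for every row index i, ||e_i^T U||_2 ≤ sqrt(r/d1) · μ1 · κ, where κ = σ_max(T)/σ_min(T) is the condition number (ratio of largest to smallest nonzero singular value). -/
open Real Matrix

/-!
Comparing `T Tᵀ = U Σ² Uᵀ` entrywise, the `i`-th row of `T` has squared norm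
`∑ₗ σₗ² Uᵢₗ² ≥ σmin² ‖Uᵢ‖²`, while it is at most `d2 ‖T‖∞²`. Spikiness bounds
`√(d1 d2) ‖T‖∞` by `μ1 ‖T‖_F`, and `‖T‖_F² = ∑ₗ σₗ² ≤ r σmax²`.
Chaining, `√d1 σmin ‖Uᵢ‖ ≤ μ1 √r σmax`.
-/

open Finset

section SVD

variable {m n k R : Type*} [Fintype n] [Fintype k] [DecidableEq k]

theorem mul_transpose_self_of_svd [CommRing R]
    {T : Matrix m n R} {U : Matrix m k R} {V : Matrix n k R} {σ : k → R}
    (hT : T = U * diagonal σ * Vᵀ) (hV : Vᵀ * V = 1) :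
    T * Tᵀ = U * diagonal (σ ^ 2) * Uᵀ := by
  subst hT
  simp only [transpose_mul, transpose_transpose, diagonal_transpose, Matrix.mul_assoc]
  rw [← Matrix.mul_assoc Vᵀ, hV, Matrix.one_mul, ← Matrix.mul_assoc (diagonal σ),
    diagonal_mul_diagonal, sq]
  rfl

variable {T : Matrix m n ℝ} {U : Matrix m k ℝ} {V : Matrix n k ℝ} {σ : k → ℝ}

theorem sum_sq_row_of_svd (hT : T = U * diagonal σ * Vᵀ) (hV : Vᵀ * V = 1) (i : m) :
    ∑ j, T i j ^ 2 = ∑ l, σ l ^ 2 * U i l ^ 2 := by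
  have h := congrFun (congrFun (mul_transpose_self_of_svd hT hV) i) i
  simp only [mul_apply, transpose_apply, diagonal_apply, mul_ite, mul_zero, sum_ite_eq',
    mem_univ, if_true, Pi.pow_apply] at h
  simp only [sq, h]
  exact sum_congr rfl fun l _ => by ring

theorem sum_sum_sq_of_svd [Fintype m] (hT : T = U * diagonal σ * Vᵀ) (hU : Uᵀ * U = 1)
    (hV : Vᵀ * V = 1) : ∑ i, ∑ j, T i j ^ 2 = ∑ l, σ l ^ 2 := by
  have h := congrArg trace (mul_transpose_self_of_svd hT hV)
  rw [trace_mul_comm _ Uᵀ, ← Matrix.mul_assoc, hU, Matrix.one_mul, trace_diagonal] at h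
  simpa [trace, mul_apply, sq] using h

theorem mul_sqrt_sum_sq_row_le_of_svd (hT : T = U * diagonal σ * Vᵀ) (hV : Vᵀ * V = 1)
    {σmin : ℝ} (hσmin : 0 ≤ σmin) (hσ : ∀ l, σmin ≤ σ l) (i : m) :
    σmin * √(∑ l, U i l ^ 2) ≤ √(∑ j, T i j ^ 2) := by
  rw [← sqrt_sq hσmin, ← sqrt_mul (sq_nonneg _), sum_sq_row_of_svd hT hV, mul_sum]
  refine sqrt_le_sqrt (sum_le_sum fun l _ => ?_)
  gcongr
  exact hσ l

end SVD

theorem sqrt_sum_sq_le_sqrt_card_mul {ι : Type*} [Fintype ι] {x : ι → ℝ} {M : ℝ}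
    (hx : ∀ i, |x i| ≤ M) : √(∑ i, x i ^ 2) ≤ √(Fintype.card ι) * M := by
  cases isEmpty_or_nonempty ι with
  | inl _ => simp
  | inr h =>
    have hM : 0 ≤ M := (abs_nonneg _).trans (hx h.some)
    rw [← sqrt_sq hM, ← sqrt_mul (Nat.cast_nonneg _)]
    refine sqrt_le_sqrt ?_
    calc ∑ i, x i ^ 2 ≤ ∑ _i : ι, M ^ 2 :=
          sum_le_sum fun i _ => sq_le_sq.2 (by rw [abs_of_nonneg hM]; exact hx i)
      _ = Fintype.card ι * M ^ 2 := by simp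

section Spikiness

variable {m n : Type*} [Fintype m] [Fintype n]

theorem abs_apply_le_sqrt_sum_sum_sq (T : Matrix m n ℝ) (i : m) (j : n) :
    |T i j| ≤ √(∑ i, ∑ j, T i j ^ 2) :=
  abs_le_sqrt <| calc
    T i j ^ 2 ≤ ∑ j, T i j ^ 2 := single_le_sum (fun _ _ => sq_nonneg _) (mem_univ j)
    _ ≤ ∑ i, ∑ j, T i j ^ 2 :=
      single_le_sum (f := fun i => ∑ j, T i j ^ 2)
        (fun _ _ => sum_nonneg fun _ _ => sq_nonneg _) (mem_univ i)

/-- When `‖T‖_F = 0` the quotient in `h` is the junk value `0`, but then `‖T‖∞ = 0` too. -/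
theorem mul_iSup_abs_le_of_div_le (T : Matrix m n ℝ) {c μ : ℝ} (hc : 0 ≤ c)
    (h : c * (⨆ p : m × n, |T p.1 p.2|) / √(∑ i, ∑ j, T i j ^ 2) ≤ μ) :
    c * (⨆ p : m × n, |T p.1 p.2|) ≤ μ * √(∑ i, ∑ j, T i j ^ 2) := by
  rcases (sqrt_nonneg (∑ i, ∑ j, T i j ^ 2)).eq_or_lt with hF | hF
  · have hS : (⨆ p : m × n, |T p.1 p.2|) ≤ 0 :=
      Real.iSup_le (fun p => hF ▸ abs_apply_le_sqrt_sum_sum_sq T p.1 p.2) le_rfl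
    rw [← hF, mul_zero]
    exact mul_nonpos_of_nonneg_of_nonpos hc hS
  · rwa [div_le_iff₀ hF] at h

end Spikiness

theorem incoherence_of_spikiness_general {d1 d2 r : ℕ}
    (T : Matrix (Fin d1) (Fin d2) ℝ) (U : Matrix (Fin d1) (Fin r) ℝ)
    (V : Matrix (Fin d2) (Fin r) ℝ) (σ : Fin r → ℝ)
    (μ1 σmin σmax : ℝ)
    (hSVD : T = U * Matrix.diagonal σ * Vᵀ)
    (hU : Uᵀ * U = 1) (hV : Vᵀ * V = 1)
    (hσmin : 0 < σmin) (hσ : ∀ j, σmin ≤ σ j ∧ σ j ≤ σmax)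
    (hspiki : Real.sqrt ((d1 : ℝ) * d2) * (⨆ p : Fin d1 × Fin d2, |T p.1 p.2|) /
        Real.sqrt (∑ i, ∑ j, T i j ^ 2) ≤ μ1) :
    ∀ i : Fin d1, Real.sqrt (∑ j, U i j ^ 2) ≤
      Real.sqrt ((r : ℝ) / d1) * μ1 * (σmax / σmin) := by
  intro i
  set S := ⨆ p : Fin d1 × Fin d2, |T p.1 p.2|
  have hd1 : (0 : ℝ) < d1 := Nat.cast_pos.2 (Fin.pos i)
  have hμ1 : 0 ≤ μ1 := (div_nonneg (mul_nonneg (sqrt_nonneg _)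
    (Real.iSup_nonneg fun _ => abs_nonneg _)) (sqrt_nonneg _)).trans hspiki
  have hrow_lower : σmin * √(∑ l, U i l ^ 2) ≤ √(∑ j, T i j ^ 2) :=
    mul_sqrt_sum_sq_row_le_of_svd hSVD hV hσmin.le (fun l => (hσ l).1) i
  have hrow_upper : √(∑ j, T i j ^ 2) ≤ √d2 * S := by
    simpa using sqrt_sum_sq_le_sqrt_card_mul fun j =>
      le_ciSup (Set.finite_range fun p : Fin d1 × Fin d2 => |T p.1 p.2|).bddAbove (i, j)
  have hfrob : √(∑ i, ∑ j, T i j ^ 2) ≤ √r * σmax := by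
    rw [sum_sum_sq_of_svd hSVD hU hV]
    simpa using sqrt_sum_sq_le_sqrt_card_mul fun l =>
      abs_le.2 ⟨by linarith [hσ l], (hσ l).2⟩
  have key : √d1 * (σmin * √(∑ l, U i l ^ 2)) ≤ μ1 * (√r * σmax) := calc
    _ ≤ √d1 * (√d2 * S) :=
      mul_le_mul_of_nonneg_left (hrow_lower.trans hrow_upper) (sqrt_nonneg _)
    _ = √(d1 * d2) * S := by rw [sqrt_mul (Nat.cast_nonneg _), mul_assoc]
    _ ≤ μ1 * √(∑ i, ∑ j, T i j ^ 2) := mul_iSup_abs_le_of_div_le T (sqrt_nonneg _) hspiki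
    _ ≤ μ1 * (√r * σmax) := by gcongr
  rw [show √((r : ℝ) / d1) * μ1 * (σmax / σmin) = μ1 * (√r * σmax) / (√d1 * σmin) by
    rw [sqrt_div' _ hd1.le]; field_simp, le_div_iff₀ (by positivity)]
  calc _ = √d1 * (σmin * √(∑ l, U i l ^ 2)) := by ring
    _ ≤ _ := key

/-- Spikiness implies incoherence: for a nonzero rank-`r` matrix `T = U Σ Vᵀ`
with orthonormal `U`, `V`, singular values between `σmin > 0` and `σmax`,
if `√(d1 d2) ‖T‖_∞ / ‖T‖_F ≤ μ1`, then each row of `U` has norm at most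
`√(r/d1) · μ1 · (σmax/σmin)`. -/
theorem incoherence_of_spikiness {d1 d2 r : ℕ}
    (T : Matrix (Fin d1) (Fin d2) ℝ) (U : Matrix (Fin d1) (Fin r) ℝ)
    (V : Matrix (Fin d2) (Fin r) ℝ) (σ : Fin r → ℝ)
    (μ1 σmin σmax : ℝ)
    (hT0 : T ≠ 0)
    (hSVD : T = U * Matrix.diagonal σ * Vᵀ)
    (hU : Uᵀ * U = 1) (hV : Vᵀ * V = 1)
    (hσmin : 0 < σmin) (hσ : ∀ j, σmin ≤ σ j ∧ σ j ≤ σmax)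
    (hspiki : Real.sqrt ((d1 : ℝ) * d2) * (⨆ p : Fin d1 × Fin d2, |T p.1 p.2|) /
        Real.sqrt (∑ i, ∑ j, T i j ^ 2) ≤ μ1) :
    ∀ i : Fin d1, Real.sqrt (∑ j, U i j ^ 2) ≤
      Real.sqrt ((r : ℝ) / d1) * μ1 * (σmax / σmin) :=
  incoherence_of_spikiness_general T U V σ μ1 σmin σmax hSVD hU hV hσmin hσ hspiki
end

section
/- Let X_1, ..., X_n be i.i.d. Bernoulli(q) random variables with sum S. If n·q ≤ 3·log(1/δ) for some δ ∈ (0,1), then P(S ≥ 10·log(1/δ)) ≤ δ. -/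
open MeasureTheory ProbabilityTheory Real

/-!
For `{0,1}`-valued variables, `exp (t X) = 1 + (eᵗ - 1) X`, so the moment generating function of
a Bernoulli(p) variable is `1 + (eᵗ - 1) p ≤ exp ((eᵗ - 1) p)`. By independence and the
exponential Markov inequality at `t = 1`, `P(S ≥ 10 L) ≤ exp (-10 L + (e - 1) n q)`, and with
`n q ≤ 3 L` and `e - 1 ≤ 3` the exponent is at most `-L = log δ`.
-/

namespace ProbabilityTheory

lemma exp_mul_eq_one_add_indicator_of_zero_or_one {Ω : Type*} {X : Ω → ℝ}
    (hval : ∀ ω, X ω = 0 ∨ X ω = 1) (t : ℝ) :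
    (fun ω => exp (t * X ω)) =
      fun ω => 1 + (exp t - 1) * {ω | X ω = 1}.indicator 1 ω := by
  funext ω
  rcases hval ω with h | h <;> simp [h]

variable {Ω : Type*} [MeasurableSpace Ω] {μ : Measure Ω} {X : Ω → ℝ}

lemma integrable_exp_mul_of_zero_or_one [IsFiniteMeasure μ] (hX : Measurable X)
    (hval : ∀ ω, X ω = 0 ∨ X ω = 1) (t : ℝ) :
    Integrable (fun ω => exp (t * X ω)) μ := by
  rw [exp_mul_eq_one_add_indicator_of_zero_or_one hval]
  exact (integrable_const 1).add
    (((integrable_const 1).indicator (hX (measurableSet_singleton 1))).const_mul _)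

lemma mgf_eq_of_zero_or_one [IsProbabilityMeasure μ] (hX : Measurable X)
    (hval : ∀ ω, X ω = 0 ∨ X ω = 1) (t : ℝ) :
    mgf X μ t = 1 + (exp t - 1) * μ.real {ω | X ω = 1} := by
  have hs : MeasurableSet {ω | X ω = 1} := hX (measurableSet_singleton 1)
  rw [mgf, exp_mul_eq_one_add_indicator_of_zero_or_one hval,
    integral_add (integrable_const 1) (((integrable_const 1).indicator hs).const_mul _),
    integral_const_mul, integral_indicator_one hs]
  simp

lemma mgf_le_exp_of_zero_or_one [IsProbabilityMeasure μ] (hX : Measurable X)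
    (hval : ∀ ω, X ω = 0 ∨ X ω = 1) (t : ℝ) :
    mgf X μ t ≤ exp ((exp t - 1) * μ.real {ω | X ω = 1}) := by
  rw [mgf_eq_of_zero_or_one hX hval, add_comm]
  exact add_one_le_exp _

theorem measureReal_sum_ge_le_of_iIndepFun_of_zero_or_one {ι : Type*} [Fintype ι]
    [IsProbabilityMeasure μ] {X : ι → Ω → ℝ} (hmeas : ∀ i, Measurable (X i)) (hindep : iIndepFun X μ)
    (hval : ∀ i ω, X i ω = 0 ∨ X i ω = 1) (ε : ℝ) {t : ℝ} (ht : 0 ≤ t) :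
    μ.real {ω | ε ≤ ∑ i, X i ω} ≤
      exp (-t * ε + (exp t - 1) * ∑ i, μ.real {ω | X i ω = 1}) := by
  have hint : Integrable (fun ω => exp (t * (∑ i, X i) ω)) μ :=
    hindep.integrable_exp_mul_sum hmeas fun i _ =>
      integrable_exp_mul_of_zero_or_one (hmeas i) (hval i) t
  have hmarkov := measure_ge_le_exp_mul_mgf ε ht hint
  simp only [Finset.sum_apply] at hmarkov
  calc μ.real {ω | ε ≤ ∑ i, X i ω}
      ≤ exp (-t * ε) * ∏ i, mgf (X i) μ t := by rwa [← hindep.mgf_sum hmeas]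
    _ ≤ exp (-t * ε) * ∏ i, exp ((exp t - 1) * μ.real {ω | X i ω = 1}) := by
        gcongr with i
        · exact fun i _ => (mgf_pos (integrable_exp_mul_of_zero_or_one (hmeas i) (hval i) t)).le
        · exact mgf_le_exp_of_zero_or_one (hmeas i) (hval i) t
    _ = exp (-t * ε + (exp t - 1) * ∑ i, μ.real {ω | X i ω = 1}) := by
        rw [← exp_sum, ← exp_add, Finset.mul_sum]

end ProbabilityTheory

theorem bernoulli_chernoff_sparse_general {Ω : Type*} [MeasurableSpace Ω] (μ : Measure Ω)
    [IsProbabilityMeasure μ] {n : ℕ} (X : Fin n → Ω → ℝ) (q δ : ℝ)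
    (hq0 : 0 ≤ q) (hδ : δ ∈ Set.Ioo (0 : ℝ) 1)
    (hmeas : ∀ i, Measurable (X i))
    (hindep : iIndepFun X μ)
    (hval : ∀ i ω, X i ω = 0 ∨ X i ω = 1)
    (hp : ∀ i, μ {ω | X i ω = 1} = ENNReal.ofReal q)
    (hnq : (n : ℝ) * q ≤ 3 * Real.log (1 / δ)) :
    μ {ω | 10 * Real.log (1 / δ) ≤ ∑ i, X i ω} ≤ ENNReal.ofReal δ := by
  obtain ⟨hδ0, hδ1⟩ := hδ
  set L := Real.log (1 / δ)
  have hL : 0 ≤ L := log_nonneg (by rw [le_div_iff₀ hδ0]; linarith)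
  have hsum : ∑ i, μ.real {ω | X i ω = 1} = n * q := by
    simp [measureReal_def, hp, ENNReal.toReal_ofReal hq0]
  have he : exp 1 - 1 ≤ 3 := by linarith [exp_one_lt_d9]
  have hexponent : -1 * (10 * L) + (exp 1 - 1) * ∑ i, μ.real {ω | X i ω = 1} ≤ log δ := by
    have : (exp 1 - 1) * (n * q) ≤ 3 * (3 * L) :=
      mul_le_mul he hnq (by positivity) (by norm_num)
    rw [hsum, show log δ = -L by simp [L, log_inv]]
    linarith
  rw [ENNReal.le_ofReal_iff_toReal_le (measure_ne_top _ _) hδ0.le, ← measureReal_def]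
  calc μ.real {ω | 10 * L ≤ ∑ i, X i ω}
      ≤ exp (-1 * (10 * L) + (exp 1 - 1) * ∑ i, μ.real {ω | X i ω = 1}) :=
        measureReal_sum_ge_le_of_iIndepFun_of_zero_or_one hmeas hindep hval _ zero_le_one
    _ ≤ exp (log δ) := exp_le_exp.mpr hexponent
    _ = δ := exp_log hδ0

/-- Chernoff-type bound in the sparse regime: for i.i.d. Bernoulli(q) variables
with `n q ≤ 3 log(1/δ)`, `P(S ≥ 10 log(1/δ)) ≤ δ`. -/
theorem bernoulli_chernoff_sparse {Ω : Type*} [MeasurableSpace Ω] (μ : Measure Ω)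
    [IsProbabilityMeasure μ] {n : ℕ} (X : Fin n → Ω → ℝ) (q δ : ℝ)
    (hq0 : 0 ≤ q) (hq1 : q ≤ 1) (hδ : δ ∈ Set.Ioo (0 : ℝ) 1)
    (hmeas : ∀ i, Measurable (X i))
    (hindep : iIndepFun X μ)
    (hval : ∀ i ω, X i ω = 0 ∨ X i ω = 1)
    (hp : ∀ i, μ {ω | X i ω = 1} = ENNReal.ofReal q)
    (hnq : (n : ℝ) * q ≤ 3 * Real.log (1 / δ)) :
    μ {ω | 10 * Real.log (1 / δ) ≤ ∑ i, X i ω} ≤ ENNReal.ofReal δ :=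
  bernoulli_chernoff_sparse_general μ X q δ hq0 hδ hmeas hindep hval hp hnq
end

section
/- Let A and B be d×d real symmetric matrices, with B = A + E. Let u be a unit-norm top eigenvector of A with eigenvalue λ₁(A), and suppose the eigengap λ₁(A) - λ₂(A) > 2||E||_op. Then the top eigenvector v of B satisfies min(||v - u||, ||v + u||) ≤ 2√2 ||E||_op / (λ₁(A) - λ₂(A) - 2||E||_op). -/
open Matrix Real

open scoped InnerProductSpace

/-!
Write `v = ⟪u, v⟫ u + w` with `w ⊥ u`. Pairing `(A + E) v = μ v` with `w` and using `A u = λ₁ u`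
gives `μ ‖w‖² = ⟪w, A w⟫ + ⟪w, E v⟫ ≤ λ₂ ‖w‖² + ε ‖w‖`, while the Rayleigh quotient of `A + E` at
`u` gives `μ ≥ λ₁ - ε`; hence `‖w‖ ≤ ε / (λ₁ - λ₂ - ε)`. Since `‖w‖² = 1 - ⟪u, v⟫²`, one of
`‖v ∓ u‖² = 2 ∓ 2⟪u, v⟫` is at most `2 ‖w‖²`.
-/

section

variable {V : Type*} [NormedAddCommGroup V] [InnerProductSpace ℝ V]

theorem Submodule.inner_map_self_le_mul_norm_sq (K : Submodule ℝ V) (T : V →ₗ[ℝ] V) {c : ℝ}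
    (h : ∀ w ∈ K, ‖w‖ = 1 → ⟪w, T w⟫_ℝ ≤ c) {w : V} (hw : w ∈ K) :
    ⟪w, T w⟫_ℝ ≤ c * ‖w‖ ^ 2 := by
  rcases eq_or_ne w 0 with rfl | hw0
  · simp
  have hunit := h _ (K.smul_mem (‖w‖⁻¹) hw) (norm_smul_inv_norm hw0)
  rw [map_smul, real_inner_smul_left, real_inner_smul_right, ← mul_assoc] at hunit
  calc ⟪w, T w⟫_ℝ = ‖w‖ ^ 2 * (‖w‖⁻¹ * ‖w‖⁻¹ * ⟪w, T w⟫_ℝ) := by field_simp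
    _ ≤ ‖w‖ ^ 2 * c := by gcongr
    _ = c * ‖w‖ ^ 2 := mul_comm _ _

theorem neg_mul_norm_sq_le_inner_map_self {E : V →ₗ[ℝ] V} {ε : ℝ} (hE : ∀ x, ‖E x‖ ≤ ε * ‖x‖)
    (x : V) : -(ε * ‖x‖ ^ 2) ≤ ⟪x, E x⟫_ℝ := by
  have := (abs_le.mp ((abs_real_inner_le_norm x (E x)).trans
    (mul_le_mul_of_nonneg_left (hE x) (norm_nonneg x)))).1
  linarith

theorem min_norm_sub_norm_add_le {u v : V} (hu : ‖u‖ = 1) (hv : ‖v‖ = 1) :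
    min ‖v - u‖ ‖v + u‖ ≤ √2 * ‖v - ⟪u, v⟫_ℝ • u‖ := by
  have hc : |⟪u, v⟫_ℝ| ≤ 1 := by simpa [hu, hv] using abs_real_inner_le_norm u v
  have hperp : ‖v - ⟪u, v⟫_ℝ • u‖ ^ 2 = 1 - ⟪u, v⟫_ℝ ^ 2 := by
    rw [norm_sub_sq_real, real_inner_smul_right, norm_smul, real_inner_comm, hu, hv,
      Real.norm_eq_abs, mul_one, sq_abs]
    ring
  have hmin : min ‖v - u‖ ‖v + u‖ ≤ √(2 * (1 - ⟪u, v⟫_ℝ ^ 2)) := by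
    rcases le_total 0 ⟪u, v⟫_ℝ with hc0 | hc0
    · refine (min_le_left _ _).trans (Real.le_sqrt_of_sq_le ?_)
      rw [norm_sub_sq_real, real_inner_comm, hu, hv]
      nlinarith [abs_of_nonneg hc0]
    · refine (min_le_right _ _).trans (Real.le_sqrt_of_sq_le ?_)
      rw [norm_add_sq_real, real_inner_comm, hu, hv]
      nlinarith [abs_of_nonpos hc0]
  rwa [← Real.sqrt_sq (norm_nonneg (v - ⟪u, v⟫_ℝ • u)), hperp, ← Real.sqrt_mul zero_le_two]

theorem eigengap_mul_norm_sq_le {A E : V →ₗ[ℝ] V} {u v : V} {lam₁ lam₂ μ ε : ℝ}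
    (hu : A u = lam₁ • u) (hu1 : ‖u‖ = 1) (hlam₂ : ∀ w ∈ (ℝ ∙ u)ᗮ, ‖w‖ = 1 → ⟪w, A w⟫_ℝ ≤ lam₂)
    (hv : (A + E) v = μ • v) (hv1 : ‖v‖ = 1) (hE : ∀ x, ‖E x‖ ≤ ε * ‖x‖) :
    (μ - lam₂) * ‖v - ⟪u, v⟫_ℝ • u‖ ^ 2 ≤ ε * ‖v - ⟪u, v⟫_ℝ • u‖ := by
  set c := ⟪u, v⟫_ℝ
  set w := v - c • u
  have hwu : ⟪w, u⟫_ℝ = 0 := by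
    rw [inner_sub_left, real_inner_smul_left, real_inner_self_eq_norm_sq, hu1, real_inner_comm]
    ring
  have hvw : v = w + c • u := (sub_add_cancel v _).symm
  have hBv : ⟪w, (A + E) v⟫_ℝ = μ * ‖w‖ ^ 2 := by
    rw [hv, real_inner_smul_right, hvw, inner_add_right, real_inner_smul_right, hwu,
      real_inner_self_eq_norm_sq, mul_zero, add_zero]
  have hAv : ⟪w, A v⟫_ℝ = ⟪w, A w⟫_ℝ := by
    rw [hvw, map_add, map_smul, hu, inner_add_right, real_inner_smul_right,
      real_inner_smul_right, hwu, mul_zero, mul_zero, add_zero]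
  have hAw : ⟪w, A w⟫_ℝ ≤ lam₂ * ‖w‖ ^ 2 :=
    (ℝ ∙ u)ᗮ.inner_map_self_le_mul_norm_sq A hlam₂
      (Submodule.mem_orthogonal_singleton_iff_inner_right.2 (by rwa [real_inner_comm]))
  have hEv : ⟪w, E v⟫_ℝ ≤ ε * ‖w‖ := by
    calc ⟪w, E v⟫_ℝ ≤ ‖w‖ * ‖E v‖ := real_inner_le_norm w (E v)
      _ ≤ ‖w‖ * ε := by simpa [hv1] using mul_le_mul_of_nonneg_left (hE v) (norm_nonneg w)
      _ = ε * ‖w‖ := mul_comm _ _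
  rw [LinearMap.add_apply, inner_add_right, hAv] at hBv
  linarith

theorem min_norm_sub_norm_add_le_div_eigengap {A E : V →ₗ[ℝ] V} {u v : V} {lam₁ lam₂ μ ε : ℝ}
    (hu : A u = lam₁ • u) (hu1 : ‖u‖ = 1) (hlam₂ : ∀ w ∈ (ℝ ∙ u)ᗮ, ‖w‖ = 1 → ⟪w, A w⟫_ℝ ≤ lam₂)
    (hv : (A + E) v = μ • v) (hv1 : ‖v‖ = 1) (hμ : ⟪u, (A + E) u⟫_ℝ ≤ μ)
    (hε : 0 ≤ ε) (hE : ∀ x, ‖E x‖ ≤ ε * ‖x‖) (hgap : ε < lam₁ - lam₂) :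
    min ‖v - u‖ ‖v + u‖ ≤ √2 * ε / (lam₁ - lam₂ - ε) := by
  set w := v - ⟪u, v⟫_ℝ • u
  have hg : 0 < lam₁ - lam₂ - ε := sub_pos.2 hgap
  have hμ₁ : lam₁ - ε ≤ μ := by
    have := neg_mul_norm_sq_le_inner_map_self hE u
    rw [LinearMap.add_apply, inner_add_right, hu, real_inner_smul_right,
      real_inner_self_eq_norm_sq, hu1] at hμ
    rw [hu1] at this
    linarith
  have hw : ‖w‖ ≤ ε / (lam₁ - lam₂ - ε) := by
    have key := eigengap_mul_norm_sq_le hu hu1 hlam₂ hv hv1 hE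
    rw [le_div_iff₀ hg]
    rcases (norm_nonneg w).eq_or_lt with hw0 | hw0
    · rw [← hw0, zero_mul]; exact hε
    · nlinarith
  calc min ‖v - u‖ ‖v + u‖ ≤ √2 * ‖w‖ := min_norm_sub_norm_add_le hu1 hv1
    _ ≤ √2 * (ε / (lam₁ - lam₂ - ε)) := by gcongr
    _ = √2 * ε / (lam₁ - lam₂ - ε) := (mul_div_assoc _ _ _).symm

end

namespace EuclideanSpace

variable {ι : Type*} [Fintype ι]

theorem real_norm_eq (x : EuclideanSpace ℝ ι) : ‖x‖ = √(∑ i, x i ^ 2) := by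
  rw [← real_norm_sq_eq, Real.sqrt_sq (norm_nonneg x)]

theorem norm_eq_one_iff_sum_sq (x : EuclideanSpace ℝ ι) : ‖x‖ = 1 ↔ ∑ i, x i ^ 2 = 1 := by
  rw [← real_norm_sq_eq, pow_eq_one_iff_of_nonneg (norm_nonneg x) two_ne_zero]

theorem real_inner_eq_dotProduct (x y : EuclideanSpace ℝ ι) : ⟪x, y⟫_ℝ = x.ofLp ⬝ᵥ y.ofLp := by
  simp [inner_eq_star_dotProduct, dotProduct_comm]

end EuclideanSpace

theorem davis_kahan_top_eigenvector_general {d : ℕ} (A B E : Matrix (Fin d) (Fin d) ℝ)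
    (u v : Fin d → ℝ) (lam1 lam2 mu1 εop : ℝ)
    (hBE : B = A + E)
    (hu : A.mulVec u = lam1 • u) (hunorm : ∑ i, u i ^ 2 = 1)
    (hlam2 : ∀ w : Fin d → ℝ, ∑ i, w i ^ 2 = 1 → w ⬝ᵥ u = 0 → w ⬝ᵥ A.mulVec w ≤ lam2)
    (hv : B.mulVec v = mu1 • v) (hvnorm : ∑ i, v i ^ 2 = 1)
    (hmu1 : ∀ w : Fin d → ℝ, ∑ i, w i ^ 2 = 1 → w ⬝ᵥ B.mulVec w ≤ mu1)
    (hεop : 0 ≤ εop)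
    (hE : ∀ w : Fin d → ℝ,
      Real.sqrt (∑ i, (E.mulVec w) i ^ 2) ≤ εop * Real.sqrt (∑ i, w i ^ 2))
    (hgap : 2 * εop < lam1 - lam2) :
    min (Real.sqrt (∑ i, (v i - u i) ^ 2)) (Real.sqrt (∑ i, (v i + u i) ^ 2)) ≤
      2 * Real.sqrt 2 * εop / (lam1 - lam2 - 2 * εop) := by
  set U := WithLp.toLp 2 u
  set W := WithLp.toLp 2 v
  have hTB : toLpLin 2 2 B = toLpLin 2 2 A + toLpLin 2 2 E := by rw [hBE, map_add]
  have hAU : toLpLin 2 2 A U = lam1 • U := by simp [U, hu]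
  have hBW : (toLpLin 2 2 A + toLpLin 2 2 E) W = mu1 • W := by simp [← hTB, W, hv]
  have hU1 : ‖U‖ = 1 := (EuclideanSpace.norm_eq_one_iff_sum_sq U).2 hunorm
  have hW1 : ‖W‖ = 1 := (EuclideanSpace.norm_eq_one_iff_sum_sq W).2 hvnorm
  have hlam2' : ∀ w ∈ (ℝ ∙ U)ᗮ, ‖w‖ = 1 → ⟪w, toLpLin 2 2 A w⟫_ℝ ≤ lam2 := by
    intro w hwU hw1
    rw [Submodule.mem_orthogonal_singleton_iff_inner_right, real_inner_comm,
      EuclideanSpace.real_inner_eq_dotProduct] at hwU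
    rw [EuclideanSpace.real_inner_eq_dotProduct]
    simpa using hlam2 (WithLp.ofLp w) ((EuclideanSpace.norm_eq_one_iff_sum_sq w).1 hw1) hwU
  have hmu1' : ⟪U, (toLpLin 2 2 A + toLpLin 2 2 E) U⟫_ℝ ≤ mu1 := by
    simpa [← hTB, EuclideanSpace.real_inner_eq_dotProduct, U] using hmu1 u hunorm
  have hE' : ∀ x, ‖toLpLin 2 2 E x‖ ≤ εop * ‖x‖ := by
    intro x
    simpa [EuclideanSpace.real_norm_eq] using hE (WithLp.ofLp x)
  calc min √(∑ i, (v i - u i) ^ 2) √(∑ i, (v i + u i) ^ 2) = min ‖W - U‖ ‖W + U‖ := by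
        simp [EuclideanSpace.real_norm_eq, U, W]
    _ ≤ √2 * εop / (lam1 - lam2 - εop) :=
        min_norm_sub_norm_add_le_div_eigengap hAU hU1 hlam2' hBW hW1 hmu1' hεop hE' (by linarith)
    _ ≤ 2 * √2 * εop / (lam1 - lam2 - 2 * εop) :=
        div_le_div₀ (by positivity) (by nlinarith [Real.sqrt_nonneg 2]) (by linarith) (by linarith)

/-- Davis–Kahan type perturbation bound for the top eigenvector: for symmetric
`A` and `B = A + E` with `‖E‖_op ≤ εop` and eigengap `λ₁(A) - λ₂(A) > 2εop`,
the unit top eigenvectors `u` of `A` and `v` of `B` satisfy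
`min(‖v - u‖, ‖v + u‖) ≤ 2√2 εop / (λ₁ - λ₂ - 2εop)`. -/
theorem davis_kahan_top_eigenvector {d : ℕ} (A B E : Matrix (Fin d) (Fin d) ℝ)
    (u v : Fin d → ℝ) (lam1 lam2 mu1 εop : ℝ)
    (hAsymm : Aᵀ = A) (hBsymm : Bᵀ = B)
    (hBE : B = A + E)
    (hu : A.mulVec u = lam1 • u) (hunorm : ∑ i, u i ^ 2 = 1)
    (hlam1 : ∀ w : Fin d → ℝ, ∑ i, w i ^ 2 = 1 → w ⬝ᵥ A.mulVec w ≤ lam1)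
    (hlam2 : ∀ w : Fin d → ℝ, ∑ i, w i ^ 2 = 1 → w ⬝ᵥ u = 0 → w ⬝ᵥ A.mulVec w ≤ lam2)
    (hv : B.mulVec v = mu1 • v) (hvnorm : ∑ i, v i ^ 2 = 1)
    (hmu1 : ∀ w : Fin d → ℝ, ∑ i, w i ^ 2 = 1 → w ⬝ᵥ B.mulVec w ≤ mu1)
    (hεop : 0 ≤ εop)
    (hE : ∀ w : Fin d → ℝ,
      Real.sqrt (∑ i, (E.mulVec w) i ^ 2) ≤ εop * Real.sqrt (∑ i, w i ^ 2))
    (hgap : 2 * εop < lam1 - lam2) :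
    min (Real.sqrt (∑ i, (v i - u i) ^ 2)) (Real.sqrt (∑ i, (v i + u i) ^ 2)) ≤
      2 * Real.sqrt 2 * εop / (lam1 - lam2 - 2 * εop) :=
  davis_kahan_top_eigenvector_general A B E u v lam1 lam2 mu1 εop hBE hu hunorm hlam2 hv hvnorm hmu1
    hεop hE hgap
end
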